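/- arXiv:1909.09959 — 2 statements merged into one kernel-verified Lean document; each statement's English description precedes it below -/
import Mathlib

section
/- Let J be an n×n real matrix with J² = −I and Jᵀ = −J, let A be any n×n real matrix, and let S be an n×n real matrix with S·J + J·S = 0 and Sᵀ + S = 0. Then trace(Φ_J(A)·Sᵀ) = trace(A·Sᵀ), where Φ_J(A) = (1/4)·((A + J·A·J) − (A + J·A·J)ᵀ). -/
open Matrix

/-- For `J` with `J² = -I`, `Jᵀ = -J`, any matrix `A`, and `S` with `S·J + J·S = 0`,
`Sᵀ + S = 0`, the Frobenius inner products `⟨Φ_J(A), S⟩` and `⟨A, S⟩` agree. -/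
theorem stmt_6 (n : ℕ) (J A S : Matrix (Fin n) (Fin n) ℝ)
    (hJ2 : J * J = -1) (hJt : Jᵀ = -J)
    (hSJ : S * J + J * S = 0) (hSt : Sᵀ + S = 0) :
    Matrix.trace (((1 / 4 : ℝ) • ((A + J * A * J) - (A + J * A * J)ᵀ)) * Sᵀ)
      = Matrix.trace (A * Sᵀ) := by
  have hS : Sᵀ = -S := eq_neg_of_add_eq_zero_left hSt
  have hJS : J * S = -(S * J) := eq_neg_of_add_eq_zero_right hSJ
  have hT : trace (A * Sᵀ) = - trace (S * A) := by
    rw [hS, mul_neg, trace_neg, trace_mul_comm]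
  have t2 : trace (J * A * J * Sᵀ) = trace (A * Sᵀ) := by
    have h1 : J * A * J * Sᵀ = J * A * (S * J) := by
      rw [hS, mul_assoc, mul_neg, hJS, neg_neg]
    rw [h1, trace_mul_comm, hT]
    have h2 : S * J * (J * A) = -(S * A) := by
      rw [mul_assoc, ← mul_assoc J J A, hJ2, neg_one_mul, mul_neg]
    rw [h2, trace_neg]
  have t3 : trace (Aᵀ * Sᵀ) = - trace (A * Sᵀ) := by
    rw [← transpose_mul, trace_transpose, hT, neg_neg]
  have t4 : trace ((J * A * J)ᵀ * Sᵀ) = - trace (A * Sᵀ) := by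
    rw [← transpose_mul, trace_transpose, hS, mul_neg, trace_neg, neg_neg]
    have h1 : trace (S * (J * A * J)) = trace (J * (S * J * A)) := by
      rw [← mul_assoc, ← mul_assoc, trace_mul_comm]
    have h2 : J * (S * J * A) = S * A := by
      rw [← mul_assoc, ← mul_assoc, hJS, neg_mul, neg_mul, mul_assoc S J J, hJ2,
        mul_neg_one, neg_mul, neg_neg]
    rw [h1, h2, trace_mul_comm]
  rw [smul_mul_assoc, trace_smul, sub_mul, add_mul, transpose_add, add_mul,
    trace_sub, trace_add, trace_add, t2, t3, t4, smul_eq_mul]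
  ring
end

section
/- Let U ⊆ ℝⁿ be open, let J : U → M_N(ℝ) be twice continuously differentiable with J(y)² = −I for all y ∈ U, and let λ₀ ∈ M_N(ℝ) be a constant matrix. Then at every point of U, 2·Σ_{p=1}^{n} ( J·(∂_p J)² + (∂_p J)²·J ) = Σ_{p=1}^{n} ∂_p ( [J − λ₀, [∂_p J, J]] ) − [J − λ₀, [ΔJ, J]], where [A,B] = A·B − B·A and ΔJ = Σ_p ∂²_{pp} J. -/
open Matrix

attribute [local instance] Matrix.normedAddCommGroup Matrix.normedSpace

/-- The partial derivative of a matrix-valued map in the `p`-th coordinate direction. -/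
noncomputable def pderivM (n N : ℕ) (p : Fin n)
    (f : EuclideanSpace ℝ (Fin n) → Matrix (Fin N) (Fin N) ℝ) :
    EuclideanSpace ℝ (Fin n) → Matrix (Fin N) (Fin N) ℝ :=
  fun x => fderiv ℝ f x (EuclideanSpace.single p 1)

/-- The componentwise Euclidean Laplacian `Δf = Σ_p ∂²_{pp} f` of a matrix-valued map. -/
noncomputable def laplM (n N : ℕ)
    (f : EuclideanSpace ℝ (Fin n) → Matrix (Fin N) (Fin N) ℝ) :
    EuclideanSpace ℝ (Fin n) → Matrix (Fin N) (Fin N) ℝ :=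
  fun x => ∑ p, pderivM n N p (pderivM n N p f) x

/-- Commutator of matrices. -/
def commM (N : ℕ) (A B : Matrix (Fin N) (Fin N) ℝ) : Matrix (Fin N) (Fin N) ℝ :=
  A * B - B * A

/-- Matrix multiplication as a continuous bilinear map. -/
noncomputable def mulCLM (N : ℕ) :
    Matrix (Fin N) (Fin N) ℝ →L[ℝ] Matrix (Fin N) (Fin N) ℝ →L[ℝ] Matrix (Fin N) (Fin N) ℝ :=
  LinearMap.toContinuousLinearMap
    { toFun := fun A => LinearMap.toContinuousLinearMap (LinearMap.mulLeft ℝ A)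
      map_add' := fun A A' => by ext B; simp [add_mul]
      map_smul' := fun c A => by ext B; simp [smul_mul_assoc] }

@[simp] lemma mulCLM_apply {N : ℕ} (A B : Matrix (Fin N) (Fin N) ℝ) :
    mulCLM N A B = A * B := by
  simp [mulCLM]

lemma hasFDerivAt_matMul {n N : ℕ}
    {f g : EuclideanSpace ℝ (Fin n) → Matrix (Fin N) (Fin N) ℝ}
    {x : EuclideanSpace ℝ (Fin n)}
    (hf : DifferentiableAt ℝ f x) (hg : DifferentiableAt ℝ g x) :
    HasFDerivAt (fun y => f y * g y)
      (((mulCLM N).isBoundedBilinearMap.deriv (f x, g x)).comp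
        ((fderiv ℝ f x).prod (fderiv ℝ g x))) x := by
  have H := HasFDerivAt.comp x ((mulCLM N).isBoundedBilinearMap.hasFDerivAt (f x, g x))
    (HasFDerivAt.prodMk hf.hasFDerivAt hg.hasFDerivAt)
  have : (fun y => mulCLM N (f y) (g y)) = fun y => f y * g y := by
    funext y; simp
  exact this ▸ H

lemma differentiableAt_matMul {n N : ℕ}
    {f g : EuclideanSpace ℝ (Fin n) → Matrix (Fin N) (Fin N) ℝ}
    {x : EuclideanSpace ℝ (Fin n)}
    (hf : DifferentiableAt ℝ f x) (hg : DifferentiableAt ℝ g x) :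
    DifferentiableAt ℝ (fun y => f y * g y) x :=
  (hasFDerivAt_matMul hf hg).differentiableAt

lemma pderivM_mul {n N : ℕ}
    {f g : EuclideanSpace ℝ (Fin n) → Matrix (Fin N) (Fin N) ℝ}
    {x : EuclideanSpace ℝ (Fin n)} (p : Fin n)
    (hf : DifferentiableAt ℝ f x) (hg : DifferentiableAt ℝ g x) :
    pderivM n N p (fun y => f y * g y) x
      = pderivM n N p f x * g x + f x * pderivM n N p g x := by
  have H := hasFDerivAt_matMul hf hg
  unfold pderivM
  erw [H.fderiv]
  simp [IsBoundedBilinearMap.deriv_apply, add_comm]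
  rfl

lemma pderivM_sub {n N : ℕ}
    {f g : EuclideanSpace ℝ (Fin n) → Matrix (Fin N) (Fin N) ℝ}
    {x : EuclideanSpace ℝ (Fin n)} (p : Fin n)
    (hf : DifferentiableAt ℝ f x) (hg : DifferentiableAt ℝ g x) :
    pderivM n N p (fun y => f y - g y) x = pderivM n N p f x - pderivM n N p g x := by
  unfold pderivM
  erw [fderiv_fun_sub hf hg]
  rfl

lemma pderivM_comm {n N : ℕ}
    {f g : EuclideanSpace ℝ (Fin n) → Matrix (Fin N) (Fin N) ℝ}
    {x : EuclideanSpace ℝ (Fin n)} (p : Fin n)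
    (hf : DifferentiableAt ℝ f x) (hg : DifferentiableAt ℝ g x) :
    pderivM n N p (fun y => commM N (f y) (g y)) x
      = commM N (pderivM n N p f x) (g x) + commM N (f x) (pderivM n N p g x) := by
  have h1 : pderivM n N p (fun y => commM N (f y) (g y)) x
      = pderivM n N p (fun y => f y * g y) x - pderivM n N p (fun y => g y * f y) x := by
    simpa [commM] using pderivM_sub (f := fun y => f y * g y) (g := fun y => g y * f y) p
      (differentiableAt_matMul hf hg) (differentiableAt_matMul hg hf)
  rw [h1, pderivM_mul p hf hg, pderivM_mul p hg hf]
  unfold commM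
  abel

lemma comm_key {N : ℕ} (A B : Matrix (Fin N) (Fin N) ℝ) (h : A * B + B * A = 0) :
    2 * (B * A ^ 2 + A ^ 2 * B) = commM N A (commM N A B) := by
  have h1 : A * B = -(B * A) := eq_neg_of_add_eq_zero_left h
  have h3 : A * B * A = -(B * A * A) := by rw [h1, neg_mul]
  have h2 : A * A * B = B * A * A := by
    calc A * A * B = A * (A * B) := by rw [mul_assoc]
      _ = A * -(B * A) := by rw [h1]
      _ = -(A * B * A) := by rw [mul_neg, mul_assoc]
      _ = B * A * A := by rw [h3, neg_neg]
  have h4 : A * (A * B - B * A) - (A * B - B * A) * A = 4 * (B * A * A) := by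
    calc A * (A * B - B * A) - (A * B - B * A) * A
        = A * A * B - A * B * A - A * B * A + B * A * A := by noncomm_ring
      _ = B * A * A - -(B * A * A) - -(B * A * A) + B * A * A := by rw [h2, h3]
      _ = 4 * (B * A * A) := by noncomm_ring
  have h5 : 2 * (B * A ^ 2 + A ^ 2 * B) = 4 * (B * A * A) := by
    rw [sq, ← mul_assoc, h2]
    noncomm_ring
  unfold commM
  rw [h5, h4]

/-- Proposition 8.2 of the paper, case `m = 1` (Euclidean metric): for `J` a `C²` map with
`J² = -I` on an open set `U` and `λ₀` a constant matrix, on `U` one has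
`2·Σ_p (J·(∂_p J)² + (∂_p J)²·J)
  = Σ_p ∂_p ([J - λ₀, [∂_p J, J]]) - [J - λ₀, [ΔJ, J]]`. -/
theorem stmt_14 (n N : ℕ) (U : Set (EuclideanSpace ℝ (Fin n))) (hU : IsOpen U)
    (J : EuclideanSpace ℝ (Fin n) → Matrix (Fin N) (Fin N) ℝ)
    (hJ : ContDiffOn ℝ 2 J U)
    (hJ2 : ∀ y ∈ U, J y * J y = -1)
    (lam0 : Matrix (Fin N) (Fin N) ℝ) :
    ∀ x ∈ U,
      2 * ∑ p, (J x * (pderivM n N p J x) ^ 2 + (pderivM n N p J x) ^ 2 * J x)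
        = (∑ p, pderivM n N p
            (fun y => commM N (J y - lam0) (commM N (pderivM n N p J y) (J y))) x)
          - commM N (J x - lam0) (commM N (laplM n N J x) (J x)) := by
  intro x hx
  have hJx : ContDiffAt ℝ 2 J x := (hJ x hx).contDiffAt (hU.mem_nhds hx)
  have hdJ : DifferentiableAt ℝ J x := hJx.differentiableAt two_ne_zero
  have hdJp : ∀ p : Fin n, DifferentiableAt ℝ (pderivM n N p J) x := by
    intro p
    have h1 := hJx.fderiv_right (m := 1) (by norm_num)
    exact (h1.differentiableAt one_ne_zero).clm_apply (differentiableAt_const _)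
  set B := J x with hB
  set A : Fin n → Matrix (Fin N) (Fin N) ℝ := fun p => pderivM n N p J x with hA
  set App : Fin n → Matrix (Fin N) (Fin N) ℝ :=
    fun p => pderivM n N p (pderivM n N p J) x with hApp
  -- the constraint relation at x
  have hrel : ∀ p : Fin n, A p * B + B * A p = 0 := by
    intro p
    have heq : (fun y => J y * J y) =ᶠ[nhds x] fun _ => (-1 : Matrix (Fin N) (Fin N) ℝ) := by
      filter_upwards [hU.mem_nhds hx] with y hy using hJ2 y hy
    have h0 : pderivM n N p (fun y => J y * J y) x = 0 := by
      unfold pderivM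
      rw [heq.fderiv_eq]
      simp
    rw [pderivM_mul p hdJ hdJ] at h0
    exact h0
  -- differentiability of `J - lam0` and the inner commutator
  have hdJl : DifferentiableAt ℝ (fun y => J y - lam0) x := hdJ.sub_const lam0
  have hdInner : ∀ p : Fin n,
      DifferentiableAt ℝ (fun y => commM N (pderivM n N p J y) (J y)) x := by
    intro p
    exact ((differentiableAt_matMul (hdJp p) hdJ).sub
      (differentiableAt_matMul hdJ (hdJp p)))
  -- compute the p-th derivative of the commutator expression
  have hterm : ∀ p : Fin n,
      pderivM n N p (fun y => commM N (J y - lam0) (commM N (pderivM n N p J y) (J y))) x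
        = commM N (A p) (commM N (A p) B) + commM N (B - lam0) (commM N (App p) B) := by
    intro p
    rw [pderivM_comm p hdJl (hdInner p)]
    have h1 : pderivM n N p (fun y => J y - lam0) x = A p := by
      have := pderivM_sub (f := J) (g := fun _ => lam0) p hdJ (differentiableAt_const _)
      have h0 : pderivM n N p (fun _ : EuclideanSpace ℝ (Fin n) => lam0) x = 0 := by
        unfold pderivM; simp
      rw [h0, sub_zero] at this
      exact this
    have h2 : pderivM n N p (fun y => commM N (pderivM n N p J y) (J y)) x
        = commM N (App p) B + commM N (A p) (A p) := by
      exact pderivM_comm p (hdJp p) hdJ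
    have h3 : commM N (A p) (A p) = 0 := by simp [commM]
    rw [h1, h2, h3, add_zero]
  have hlap : commM N (B - lam0) (commM N (laplM n N J x) B)
      = ∑ p, commM N (B - lam0) (commM N (App p) B) := by
    unfold laplM
    simp only [commM, Finset.sum_mul, Finset.mul_sum, ← Finset.sum_sub_distrib]
    rfl
  calc 2 * ∑ p, (J x * (pderivM n N p J x) ^ 2 + (pderivM n N p J x) ^ 2 * J x)
      = ∑ p, 2 * (B * (A p) ^ 2 + (A p) ^ 2 * B) := by rw [Finset.mul_sum]
    _ = ∑ p, commM N (A p) (commM N (A p) B) := by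
        exact Finset.sum_congr rfl fun p _ => comm_key (A p) B (hrel p)
    _ = (∑ p, (commM N (A p) (commM N (A p) B) + commM N (B - lam0) (commM N (App p) B)))
          - ∑ p, commM N (B - lam0) (commM N (App p) B) := by
        rw [Finset.sum_add_distrib]; abel
    _ = (∑ p, pderivM n N p
            (fun y => commM N (J y - lam0) (commM N (pderivM n N p J y) (J y))) x)
          - commM N (J x - lam0) (commM N (laplM n N J x) (J x)) := by
        rw [hlap]
        congr 1
        exact Finset.sum_congr rfl fun p _ => (hterm p).symm
end
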